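/- Let n ≥ 1, let R : ℝ → Matrix (Fin n) (Fin n) ℝ be continuous with R(t) symmetric for every t, and let r, s > 0. Let S be a Lagrangian Jacobi solution along R with S(0) = 1 and S(s) = 0 such that S(u) is invertible for every u ∈ [−r, s), and let U be a Jacobi solution along R with U(0) = 1 and U(−r) = 0. Then for every t ∈ (−r, s), U(t) = S(t) * (∫_{−r}^{t} (S(u)ᵀ * S(u))⁻¹ du) * (U'(0) − S'(0)). -/

import Mathlib

/-!
The Wronskian `W = SᵀU' - S'ᵀU` of two Jacobi solutions is constant because `R` is symmetric,
and at `t = 0` it equals `U'(0) - S'(0)`, since `S'(0)` is symmetric for the Lagrangian `S` with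
`S(0) = 1`. Wherever `S` is invertible, the Lagrangian condition `S'ᵀS = SᵀS'` gives
`(S⁻¹U)' = (SᵀS)⁻¹ W`; integrating from `-r`, where `U` vanishes, and multiplying by `S(t)`
yields the formula.
-/

open Matrix MeasureTheory

attribute [local instance] Matrix.normedAddCommGroup Matrix.normedSpace

/-- A Jacobi solution along `R`: a twice continuously differentiable matrix-valued
map `Y` satisfying `Y'' + R Y = 0`. -/
def IsJacobi {n : ℕ} (R Y : ℝ → Matrix (Fin n) (Fin n) ℝ) : Prop :=
  ContDiff ℝ 2 Y ∧ ∀ t : ℝ, deriv (deriv Y) t + R t * Y t = 0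

/-- A Lagrangian (self-conjugate) solution: the Wronskian `W(Y,Y)` vanishes. -/
def IsLagrangian {n : ℕ} (Y : ℝ → Matrix (Fin n) (Fin n) ℝ) : Prop :=
  ∀ t : ℝ, (deriv Y t)ᵀ * Y t = (Y t)ᵀ * deriv Y t

open Filter Topology

section MatrixCalculus

variable {𝕜 : Type*} [NontriviallyNormedField 𝕜] {l m n : Type*} [Fintype l] [Fintype m]
  [Fintype n]

noncomputable def Matrix.mulCLM [CompleteSpace 𝕜] :
    Matrix l m 𝕜 →L[𝕜] Matrix m n 𝕜 →L[𝕜] Matrix l n 𝕜 :=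
  LinearMap.toContinuousLinearMap
    (LinearMap.toContinuousLinearMap.toLinearMap ∘ₗ mulLinearMap 𝕜)

theorem HasDerivAt.matrix_mul [CompleteSpace 𝕜] {A : 𝕜 → Matrix l m 𝕜} {B : 𝕜 → Matrix m n 𝕜}
    {A' : Matrix l m 𝕜} {B' : Matrix m n 𝕜} {t : 𝕜}
    (hA : HasDerivAt A A' t) (hB : HasDerivAt B B' t) :
    HasDerivAt (fun u => A u * B u) (A' * B t + A t * B') t := by
  rw [add_comm]
  exact Matrix.mulCLM.hasDerivAt_of_bilinear (fun _ => hA) (fun _ => hB)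

theorem HasDerivAt.matrix_transpose {A : 𝕜 → Matrix m n 𝕜} {A' : Matrix m n 𝕜} {t : 𝕜}
    (hA : HasDerivAt A A' t) : HasDerivAt (fun u => (A u)ᵀ) A'ᵀ t :=
  hasDerivAt_pi.2 fun i => hasDerivAt_pi.2 fun j => hasDerivAt_pi.1 (hasDerivAt_pi.1 hA j) i

theorem intervalIntegral.integral_mul_matrix_const {f : ℝ → Matrix l m ℝ} {a b : ℝ}
    (hf : ContinuousOn f (Set.uIcc a b)) (C : Matrix m n ℝ) :
    ∫ x in a..b, f x * C = (∫ x in a..b, f x) * C :=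
  ((Matrix.mulCLM : Matrix l m ℝ →L[ℝ] Matrix m n ℝ →L[ℝ] Matrix l n ℝ).flip C
    ).intervalIntegral_comp_comm (hf.intervalIntegrable (μ := volume))

theorem ContinuousAt.matrix_inv {K X : Type*} [Field K] [TopologicalSpace K]
    [IsTopologicalDivisionRing K] [TopologicalSpace X] [DecidableEq n] {A : X → Matrix n n K}
    {x : X} (hA : ContinuousAt A x) (hdet : IsUnit (A x).det) :
    ContinuousAt (fun y => (A y)⁻¹) x := by
  refine (continuousAt_matrix_inv (A x) ?_).comp hA
  rw [Ring.inverse_eq_inv']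
  exact continuousAt_inv₀ hdet.ne_zero

variable [DecidableEq n]

theorem HasDerivAt.matrix_inv {A : 𝕜 → Matrix n n 𝕜} {A' : Matrix n n 𝕜} {t : 𝕜}
    (hA : HasDerivAt A A' t) (hdet : IsUnit (A t).det) :
    HasDerivAt (fun u => (A u)⁻¹) (-((A t)⁻¹ * A' * (A t)⁻¹)) t := by
  refine hasDerivAt_iff_tendsto_slope.2 ?_
  have hlim : Tendsto (fun u => -((A u)⁻¹ * slope A t u * (A t)⁻¹)) (𝓝[≠] t)
      (𝓝 (-((A t)⁻¹ * A' * (A t)⁻¹))) :=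
    ((((hA.continuousAt.matrix_inv hdet).tendsto.mono_left nhdsWithin_le_nhds).mul
      (hasDerivAt_iff_tendsto_slope.1 hA)).mul tendsto_const_nhds).neg
  refine hlim.congr' ?_
  filter_upwards [nhdsWithin_le_nhds
    ((continuous_id.matrix_det.continuousAt.comp hA.continuousAt).eventually_ne hdet.ne_zero)]
    with u hu
  -- `(A u)⁻¹ - (A t)⁻¹ = -(A u)⁻¹ (A u - A t) (A t)⁻¹`
  rw [slope_def_module, slope_def_module, Matrix.mul_smul, Matrix.smul_mul, ← smul_neg, mul_sub,
    sub_mul, Matrix.nonsing_inv_mul (A u) (isUnit_iff_ne_zero.2 hu), one_mul,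
    Matrix.mul_nonsing_inv_cancel_right _ _ hdet, neg_sub]

theorem Matrix.isUnit_det_transpose_mul_self {K : Type*} [CommRing K] {A : Matrix n n K} (hA : IsUnit A.det) :
    IsUnit (Aᵀ * A).det := by
  rw [det_mul, det_transpose]
  exact hA.mul hA

theorem HasDerivAt.matrix_inv_mul_of_lagrangian [CompleteSpace 𝕜] {S U : 𝕜 → Matrix n n 𝕜}
    {S' U' : Matrix n n 𝕜} {t : 𝕜} (hS : HasDerivAt S S' t) (hU : HasDerivAt U U' t)
    (hdet : IsUnit (S t).det) (hL : S'ᵀ * S t = (S t)ᵀ * S') :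
    HasDerivAt (fun u => (S u)⁻¹ * U u) (((S t)ᵀ * S t)⁻¹ * ((S t)ᵀ * U' - S'ᵀ * U t)) t := by
  refine ((hS.matrix_inv hdet).matrix_mul hU).congr_deriv ?_
  -- multiply by `SᵀS`; the Lagrangian condition turns `SᵀS'S⁻¹` into `S'ᵀ`
  rw [← nonsing_inv_mul_cancel_left ((S t)ᵀ * S t)
    (-((S t)⁻¹ * S' * (S t)⁻¹) * U t + (S t)⁻¹ * U') (isUnit_det_transpose_mul_self hdet)]
  congr 1
  simp only [mul_add, neg_mul, mul_neg, Matrix.mul_assoc, mul_nonsing_inv_cancel_left _ _ hdet]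
  rw [← Matrix.mul_assoc _ S', ← hL, Matrix.mul_assoc, mul_nonsing_inv_cancel_left _ _ hdet]
  abel

end MatrixCalculus

section Jacobi

variable {n : ℕ} {R Y Z : ℝ → Matrix (Fin n) (Fin n) ℝ}

theorem IsJacobi.hasDerivAt (hY : IsJacobi R Y) (t : ℝ) : HasDerivAt Y (deriv Y t) t :=
  (hY.1.differentiable two_ne_zero t).hasDerivAt

theorem IsJacobi.hasDerivAt_deriv (hY : IsJacobi R Y) (t : ℝ) :
    HasDerivAt (deriv Y) (-(R t * Y t)) t := by
  rw [← eq_neg_of_add_eq_zero_left (hY.2 t)]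
  exact (hY.1.differentiable_deriv_two t).hasDerivAt

noncomputable def wronskian (Y Z : ℝ → Matrix (Fin n) (Fin n) ℝ) (t : ℝ) :
    Matrix (Fin n) (Fin n) ℝ :=
  (Y t)ᵀ * deriv Z t - (deriv Y t)ᵀ * Z t

theorem IsJacobi.hasDerivAt_wronskian (hR : ∀ t, (R t)ᵀ = R t) (hY : IsJacobi R Y)
    (hZ : IsJacobi R Z) (t : ℝ) : HasDerivAt (wronskian Y Z) 0 t := by
  have h := ((hY.hasDerivAt t).matrix_transpose.matrix_mul (hZ.hasDerivAt_deriv t)).sub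
    ((hY.hasDerivAt_deriv t).matrix_transpose.matrix_mul (hZ.hasDerivAt t))
  refine h.congr_deriv ?_
  rw [transpose_neg, transpose_mul, hR]
  noncomm_ring

theorem IsJacobi.wronskian_eq (hR : ∀ t, (R t)ᵀ = R t) (hY : IsJacobi R Y) (hZ : IsJacobi R Z)
    (s t : ℝ) : wronskian Y Z s = wronskian Y Z t :=
  is_const_of_deriv_eq_zero (fun u => (hY.hasDerivAt_wronskian hR hZ u).differentiableAt)
    (fun u => (hY.hasDerivAt_wronskian hR hZ u).deriv) s t

end Jacobi

theorem U_eq_S_mul_integral_mul_wronskian_general {n : ℕ}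
    (R : ℝ → Matrix (Fin n) (Fin n) ℝ)
    (hRsym : ∀ t : ℝ, (R t)ᵀ = R t)
    (r s : ℝ)
    (S : ℝ → Matrix (Fin n) (Fin n) ℝ)
    (hS : IsJacobi R S) (hSL : IsLagrangian S) (hS0 : S 0 = 1)
    (hSinv : ∀ u ∈ Set.Ico (-r) s, IsUnit (S u))
    (U : ℝ → Matrix (Fin n) (Fin n) ℝ)
    (hU : IsJacobi R U) (hU0 : U 0 = 1) (hUr : U (-r) = 0) :
    ∀ t ∈ Set.Ioo (-r) s,
      U t = S t * (∫ u in (-r)..t, ((S u)ᵀ * S u)⁻¹) * (deriv U 0 - deriv S 0) := by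
  intro t ht
  have hdet : ∀ u ∈ Set.uIcc (-r) t, IsUnit (S u).det := fun u hu => by
    rw [Set.uIcc_of_le ht.1.le] at hu
    exact (isUnit_iff_isUnit_det _).1 (hSinv u ⟨hu.1, hu.2.trans_lt ht.2⟩)
  have hW : ∀ u, wronskian S U u = deriv U 0 - deriv S 0 := fun u => by
    have hS'0 : (deriv S 0)ᵀ = deriv S 0 := by simpa [hS0] using hSL 0
    rw [hS.wronskian_eq hRsym hU u 0, wronskian, hS0, hU0, transpose_one, one_mul, mul_one, hS'0]
  have hg : ContinuousOn (fun u => ((S u)ᵀ * S u)⁻¹) (Set.uIcc (-r) t) := fun u hu =>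
    ((hS.1.continuous.matrix_transpose.matrix_mul hS.1.continuous).continuousAt.matrix_inv
      (isUnit_det_transpose_mul_self (hdet u hu))).continuousWithinAt
  have hderiv : ∀ u ∈ Set.uIcc (-r) t, HasDerivAt (fun u => (S u)⁻¹ * U u)
      (((S u)ᵀ * S u)⁻¹ * (deriv U 0 - deriv S 0)) u := fun u hu => by
    rw [← hW u]
    exact (hS.hasDerivAt u).matrix_inv_mul_of_lagrangian (hU.hasDerivAt u) (hdet u hu) (hSL u)
  have hFTC : ∫ u in (-r)..t, ((S u)ᵀ * S u)⁻¹ * (deriv U 0 - deriv S 0) = (S t)⁻¹ * U t := by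
    rw [intervalIntegral.integral_eq_sub_of_hasDerivAt hderiv
      (hg.mul continuousOn_const).intervalIntegrable, hUr, Matrix.mul_zero, sub_zero]
  rw [Matrix.mul_assoc, ← intervalIntegral.integral_mul_matrix_const hg, hFTC,
    mul_nonsing_inv_cancel_left _ _ (hdet t Set.right_mem_uIcc)]

/-- `U(t) = S(t) (∫_{−r}^t (SᵀS)⁻¹(u) du) (U'(0) − S'(0))` on `(−r, s)`, where
`S(0) = 1`, `S(s) = 0`, `S` nonsingular on `[−r, s)`, and `U(0) = 1`, `U(−r) = 0`. -/
theorem U_eq_S_mul_integral_mul_wronskian {n : ℕ} (hn : 1 ≤ n)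
    (R : ℝ → Matrix (Fin n) (Fin n) ℝ) (hRc : Continuous R)
    (hRsym : ∀ t : ℝ, (R t)ᵀ = R t)
    (r s : ℝ) (hr : 0 < r) (hs : 0 < s)
    (S : ℝ → Matrix (Fin n) (Fin n) ℝ)
    (hS : IsJacobi R S) (hSL : IsLagrangian S) (hS0 : S 0 = 1) (hSs : S s = 0)
    (hSinv : ∀ u ∈ Set.Ico (-r) s, IsUnit (S u))
    (U : ℝ → Matrix (Fin n) (Fin n) ℝ)
    (hU : IsJacobi R U) (hU0 : U 0 = 1) (hUr : U (-r) = 0) :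
    ∀ t ∈ Set.Ioo (-r) s,
      U t = S t * (∫ u in (-r)..t, ((S u)ᵀ * S u)⁻¹) * (deriv U 0 - deriv S 0) :=
  U_eq_S_mul_integral_mul_wronskian_general R hRsym r s S hS hSL hS0 hSinv U hU hU0 hUr
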